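/- arXiv:2509.09240 — 3 statements merged into one kernel-verified Lean document; each statement's English description precedes it below -/
import Mathlib

section
/- Let n ≥ 1 and let f : 𝕋 → M_n(ℂ). If (f₋, f₊) and (g₋, g₊) are two right canonical factorization data for f, then f₋(z̄) · f₊(z) = g₋(z̄) · g₊(z) for every z in the closed unit disk 𝔻̄. In other words, the interior extension f^e(z) = f₋(z̄) f₊(z) of f to 𝔻̄ is independent of the choice of right canonical factorization. -/
open Complex Matrix

/-- The closed unit disk in `ℂ`. -/
def closedDisk : Set ℂ := {z : ℂ | ‖z‖ ≤ 1}

/-- The open unit disk in `ℂ`. -/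
def openDisk : Set ℂ := {z : ℂ | ‖z‖ < 1}

/-- A right canonical factorization datum for `f : 𝕋 → Mₙ(ℂ)`: a pair `(fm, fp)` of maps on the
closed unit disk, continuous there, holomorphic on the open disk, taking invertible values, with
`f z = fm z̄ * fp z` on the unit circle. -/
structure RightCanonicalFactorizationDatum (n : ℕ)
    (f fm fp : ℂ → Matrix (Fin n) (Fin n) ℂ) : Prop where
  cont_m : ContinuousOn fm closedDisk
  cont_p : ContinuousOn fp closedDisk
  hol_m : ∀ i j, DifferentiableOn ℂ (fun z => fm z i j) openDisk
  hol_p : ∀ i j, DifferentiableOn ℂ (fun z => fp z i j) openDisk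
  unit_m : ∀ z ∈ closedDisk, IsUnit (fm z)
  unit_p : ∀ z ∈ closedDisk, IsUnit (fp z)
  factor : ∀ z : ℂ, ‖z‖ = 1 → f z = fm (starRingEnd ℂ z) * fp z

/-!
Put `K z = g₊(z) f₊(z)⁻¹` and `H w = g₋(w)⁻¹ f₋(w)`. Both are holomorphic on the disk and
continuous up to the circle, and the two factorizations of `f` give `H z̄ = K z` on the circle.
For `k = ℓ ∘ K` and `h = ℓ ∘ H`, with `ℓ` a continuous linear functional, the reflection
`q z = conj (h z̄)` is again holomorphic with `q = conj k` on the circle, so `k + q` and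
`i (k - q)` are real there. A holomorphic function that is real on the boundary of a bounded
domain is constant: its imaginary part vanishes inside by the maximum principle applied to
`exp (± i F)`, and then its Cayley transform `(F - i) / (F + i)` has constant modulus one.
Hence `K` and `H` are the same constant matrix.
-/
open Set Bornology ComplexConjugate

section RealOnFrontier

variable {U : Set ℂ} {F : ℂ → ℂ}

theorem im_eq_zero_on_closure_of_im_eq_zero_on_frontier (hU : IsBounded U)
    (hF : DiffContOnCl ℂ F U) (him : ∀ z ∈ frontier U, (F z).im = 0) :
    ∀ z ∈ closure U, (F z).im = 0 := by
  have re_nonpos (c : ℂ) (hc : c.re = 0) (z : ℂ) (hz : z ∈ closure U) : (c * F z).re ≤ 0 := by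
    have hexp : DiffContOnCl ℂ (fun z => exp (c * F z)) U :=
      ⟨(hF.differentiableOn.const_mul c).cexp, (hF.continuousOn.const_smul c).cexp⟩
    have := norm_le_of_forall_mem_frontier_norm_le hU hexp (C := 1)
      (fun w hw => by simp [norm_exp, mul_re, hc, him w hw]) hz
    rwa [norm_exp, Real.exp_le_one_iff] at this
  intro z hz
  have h₁ := re_nonpos I I_re z hz
  have h₂ := re_nonpos (-I) (by simp) z hz
  simp only [mul_re, I_re, I_im, neg_re, neg_im] at h₁ h₂
  linarith

theorem eq_of_inv_add_I_mul_sub_I_eq {a b : ℂ} (ha : a + I ≠ 0) (hb : b + I ≠ 0)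
    (h : (a + I)⁻¹ * (a - I) = (b + I)⁻¹ * (b - I)) : a = b := by
  field_simp at h
  linear_combination (-I / 2) * h + (a - b) * I_sq

theorem eqOn_closure_of_im_eq_zero_on_frontier (hU : IsBounded U) (hc : IsPreconnected U)
    (ho : IsOpen U) (hF : DiffContOnCl ℂ F U) (him : ∀ z ∈ frontier U, (F z).im = 0)
    {c : ℂ} (hcU : c ∈ U) : EqOn F (Function.const ℂ (F c)) (closure U) := by
  have him' := im_eq_zero_on_closure_of_im_eq_zero_on_frontier hU hF him
  have add_I_ne_zero : ∀ z ∈ closure U, F z + I ≠ 0 := fun z hz h => by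
    simpa [him' z hz] using congrArg im h
  set G : ℂ → ℂ := fun z => (F z + I)⁻¹ * (F z - I)
  have hG : DiffContOnCl ℂ G U := ((hF.add_const I).inv add_I_ne_zero).smul (hF.sub_const I)
  have norm_G : ∀ z ∈ closure U, ‖G z‖ = 1 := fun z hz => by
    have : F z - I = conj (F z + I) := Complex.ext (by simp) (by simp [him' z hz])
    rw [norm_mul, norm_inv, this, norm_conj,
      inv_mul_cancel₀ (norm_ne_zero_iff.2 (add_I_ne_zero z hz))]
  have hmax : IsMaxOn (norm ∘ G) U c := fun z hz => by
    simp [norm_G z (subset_closure hz), norm_G c (subset_closure hcU)]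
  intro z hz
  exact eq_of_inv_add_I_mul_sub_I_eq (add_I_ne_zero z hz) (add_I_ne_zero c (subset_closure hcU))
    (Complex.eqOn_closure_of_isPreconnected_of_isMaxOn_norm hc ho hG hcU hmax hz)

end RealOnFrontier

theorem openDisk_eq_ball : openDisk = Metric.ball 0 1 := by
  ext; simp [openDisk]

theorem closure_openDisk : closure openDisk = closedDisk := by
  rw [openDisk_eq_ball, closure_ball _ one_ne_zero]; ext; simp [closedDisk]

theorem frontier_openDisk : frontier openDisk = {z : ℂ | ‖z‖ = 1} := by
  rw [openDisk_eq_ball, frontier_ball _ one_ne_zero]; ext; simp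

theorem isOpen_openDisk : IsOpen openDisk := openDisk_eq_ball ▸ Metric.isOpen_ball

theorem isBounded_openDisk : IsBounded openDisk := openDisk_eq_ball ▸ Metric.isBounded_ball

theorem isPreconnected_openDisk : IsPreconnected openDisk :=
  openDisk_eq_ball ▸ (convex_ball 0 1).isPreconnected

theorem zero_mem_openDisk : (0 : ℂ) ∈ openDisk := by simp [openDisk]

theorem mapsTo_conj_openDisk : MapsTo conj openDisk openDisk := fun z hz => by
  simpa [openDisk] using hz

theorem conj_mem_closedDisk {z : ℂ} (hz : z ∈ closedDisk) : conj z ∈ closedDisk := by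
  simpa [closedDisk] using hz

theorem DiffContOnCl.conj_comp_conj {h : ℂ → ℂ} {U : Set ℂ} (ho : IsOpen U)
    (hU : MapsTo conj U U) (hh : DiffContOnCl ℂ h U) : DiffContOnCl ℂ (conj ∘ h ∘ conj) U where
  differentiableOn z hz := by
    simpa using ((hh.differentiableAt ho (hU hz)).conj_conj).differentiableWithinAt
  continuousOn := continuous_conj.comp_continuousOn
    (hh.continuousOn.comp continuous_conj.continuousOn (hU.closure continuous_conj))

theorem eq_apply_zero_of_im_eq_zero_on_circle {F : ℂ → ℂ} (hF : DiffContOnCl ℂ F openDisk)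
    (him : ∀ z : ℂ, ‖z‖ = 1 → (F z).im = 0) : ∀ z ∈ closedDisk, F z = F 0 := by
  rw [← closure_openDisk]
  exact eqOn_closure_of_im_eq_zero_on_frontier isBounded_openDisk isPreconnected_openDisk
    isOpen_openDisk hF (by rwa [frontier_openDisk]) zero_mem_openDisk

theorem scalar_eq_of_apply_conj_eq_on_circle {k h : ℂ → ℂ} (hk : DiffContOnCl ℂ k openDisk)
    (hh : DiffContOnCl ℂ h openDisk) (hkh : ∀ z : ℂ, ‖z‖ = 1 → h (conj z) = k z)
    {z w : ℂ} (hz : z ∈ closedDisk) (hw : w ∈ closedDisk) : k z = h w := by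
  set q := conj ∘ h ∘ conj
  have hq : DiffContOnCl ℂ q openDisk := hh.conj_comp_conj isOpen_openDisk mapsTo_conj_openDisk
  have hq_circle (z : ℂ) (hz : ‖z‖ = 1) : q z = conj (k z) := by simp [q, hkh z hz]
  have hsum : ∀ z ∈ closedDisk, k z + q z = k 0 + q 0 :=
    eq_apply_zero_of_im_eq_zero_on_circle (hk.add hq) fun z hz => by simp [hq_circle z hz]
  have hdiff : ∀ z ∈ closedDisk, I * (k z - q z) = I * (k 0 - q 0) :=
    eq_apply_zero_of_im_eq_zero_on_circle ((hk.sub hq).const_smul I) fun z hz => by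
      simp [hq_circle z hz]
  have hone : (1 : ℂ) ∈ closedDisk := by simp [closedDisk]
  have hk_const (z : ℂ) (hz : z ∈ closedDisk) : k z = k 1 := by
    linear_combination (hsum z hz - hsum 1 hone) / 2 - I / 2 * (hdiff z hz - hdiff 1 hone) +
      (k z - q z - k 1 + q 1) / 2 * I_sq
  have hq_const (z : ℂ) (hz : z ∈ closedDisk) : q z = q 1 := by
    linear_combination hsum z hz - hsum 1 hone - hk_const z hz
  have hw' : h w = h 1 := by
    simpa [q] using congrArg conj (hq_const (conj w) (conj_mem_closedDisk hw))
  rw [hk_const z hz, hw', ← hkh 1 (by simp), map_one]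

theorem eq_of_apply_conj_eq_on_circle {E : Type*} [NormedAddCommGroup E] [NormedSpace ℂ E]
    {k h : ℂ → E} (hk : DiffContOnCl ℂ k openDisk) (hh : DiffContOnCl ℂ h openDisk)
    (hkh : ∀ z : ℂ, ‖z‖ = 1 → h (conj z) = k z) {z w : ℂ} (hz : z ∈ closedDisk)
    (hw : w ∈ closedDisk) : k z = h w :=
  SeparatingDual.eq_iff_forall_dual_eq.2 fun ℓ =>
    scalar_eq_of_apply_conj_eq_on_circle (k := ℓ ∘ k) (h := ℓ ∘ h)
      (ℓ.differentiable.comp_diffContOnCl hk) (ℓ.differentiable.comp_diffContOnCl hh)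
      (fun z hz => by simp [hkh z hz]) hz hw

section NormedAlgebra

variable {𝔸 : Type*} [NormedRing 𝔸] [NormedAlgebra ℂ 𝔸] {U : Set ℂ} {a b : ℂ → 𝔸}

theorem DiffContOnCl.mul (ha : DiffContOnCl ℂ a U) (hb : DiffContOnCl ℂ b U) :
    DiffContOnCl ℂ (fun z => a z * b z) U :=
  ⟨ha.differentiableOn.mul hb.differentiableOn, ha.continuousOn.mul hb.continuousOn⟩

theorem DiffContOnCl.ringInverse [CompleteSpace 𝔸] (ha : DiffContOnCl ℂ a U)
    (hu : ∀ z ∈ closure U, IsUnit (a z)) : DiffContOnCl ℂ (fun z => Ring.inverse (a z)) U where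
  differentiableOn := ha.differentiableOn.inverse fun z hz => hu z (subset_closure hz)
  continuousOn z hz := by
    have hinv : ContinuousAt Ring.inverse (a z) :=
      (hu z hz).unit_spec ▸ NormedRing.inverse_continuousAt (hu z hz).unit
    exact hinv.comp_continuousWithinAt (ha.continuousOn z hz)

end NormedAlgebra

theorem Matrix.inv_mul_eq_mul_inv_iff {ι α : Type*} [Fintype ι] [DecidableEq ι] [CommRing α]
    {A B C D : Matrix ι ι α} (hB : IsUnit B) (hC : IsUnit C) :
    C⁻¹ * A = D * B⁻¹ ↔ A * B = C * D := by
  rw [Matrix.isUnit_iff_isUnit_det] at hB hC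
  constructor <;> intro h
  · rw [← Matrix.mul_nonsing_inv_cancel_left (A := C) A hC, h, ← Matrix.mul_assoc,
      Matrix.nonsing_inv_mul_cancel_right (A := B) _ hB]
  · rw [← Matrix.nonsing_inv_mul_cancel_left (A := C) (D * B⁻¹) hC, ← Matrix.mul_assoc C, ← h,
      Matrix.mul_nonsing_inv_cancel_right (A := B) _ hB]

theorem RightCanonicalFactorizationDatum.inv_mul_conj_eq_mul_inv {n : ℕ}
    {f fm fp gm gp : ℂ → Matrix (Fin n) (Fin n) ℂ} (hf : RightCanonicalFactorizationDatum n f fm fp)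
    (hg : RightCanonicalFactorizationDatum n f gm gp) {z : ℂ} (hz : ‖z‖ = 1) :
    (gm (conj z))⁻¹ * fm (conj z) = gp z * (fp z)⁻¹ :=
  (Matrix.inv_mul_eq_mul_inv_iff (hf.unit_p z hz.le) (hg.unit_m _ (conj_mem_closedDisk hz.le))).2
    ((hf.factor z hz).symm.trans (hg.factor z hz))

section MatrixFunctions

/- The `L∞` operator norm makes square matrices a complete normed algebra; it induces the product
topology used in `RightCanonicalFactorizationDatum`. -/
attribute [local instance] Matrix.linftyOpNormedRing Matrix.linftyOpNormedAlgebra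

variable {n : ℕ} {M : ℂ → Matrix (Fin n) (Fin n) ℂ} {U : Set ℂ}

theorem DiffContOnCl.matrix_inv (hM : DiffContOnCl ℂ M U) (hu : ∀ z ∈ closure U, IsUnit (M z)) :
    DiffContOnCl ℂ (fun z => (M z)⁻¹) U := by
  simpa only [Matrix.nonsing_inv_eq_ringInverse] using hM.ringInverse hu

theorem diffContOnCl_openDisk_of_entries (hc : ContinuousOn M closedDisk)
    (hd : ∀ i j, DifferentiableOn ℂ (fun z => M z i j) openDisk) : DiffContOnCl ℂ M openDisk where
  differentiableOn := differentiableOn_pi.2 fun i => differentiableOn_pi.2 (hd i)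
  continuousOn := closure_openDisk ▸ hc

namespace RightCanonicalFactorizationDatum

variable {f fm fp gm gp : ℂ → Matrix (Fin n) (Fin n) ℂ}

theorem diffContOnCl_minus (hf : RightCanonicalFactorizationDatum n f fm fp) :
    DiffContOnCl ℂ fm openDisk :=
  diffContOnCl_openDisk_of_entries hf.cont_m hf.hol_m

theorem diffContOnCl_plus (hf : RightCanonicalFactorizationDatum n f fm fp) :
    DiffContOnCl ℂ fp openDisk :=
  diffContOnCl_openDisk_of_entries hf.cont_p hf.hol_p

theorem mul_inv_eq_inv_mul_conj (hf : RightCanonicalFactorizationDatum n f fm fp)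
    (hg : RightCanonicalFactorizationDatum n f gm gp) {z : ℂ} (hz : z ∈ closedDisk) :
    gp z * (fp z)⁻¹ = (gm (conj z))⁻¹ * fm (conj z) :=
  eq_of_apply_conj_eq_on_circle
    (hg.diffContOnCl_plus.mul (hf.diffContOnCl_plus.matrix_inv (closure_openDisk ▸ hf.unit_p)))
    ((hg.diffContOnCl_minus.matrix_inv (closure_openDisk ▸ hg.unit_m)).mul hf.diffContOnCl_minus)
    (fun _ => hf.inv_mul_conj_eq_mul_inv hg) hz (conj_mem_closedDisk hz)

end RightCanonicalFactorizationDatum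

end MatrixFunctions

theorem interior_extension_independent_of_right_factorization_general
    {n : ℕ} (f fm fp gm gp : ℂ → Matrix (Fin n) (Fin n) ℂ)
    (hf : RightCanonicalFactorizationDatum n f fm fp)
    (hg : RightCanonicalFactorizationDatum n f gm gp) :
    ∀ z ∈ closedDisk,
      fm (starRingEnd ℂ z) * fp z = gm (starRingEnd ℂ z) * gp z := fun z hz =>
  (Matrix.inv_mul_eq_mul_inv_iff (hf.unit_p z hz) (hg.unit_m _ (conj_mem_closedDisk hz))).1
    (hf.mul_inv_eq_inv_mul_conj hg hz).symm

/-- The interior extension `f^e(z) = f₋(z̄) f₊(z)` is independent of the choice of right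
canonical factorization. -/
theorem interior_extension_independent_of_right_factorization
    {n : ℕ} (hn : 1 ≤ n) (f fm fp gm gp : ℂ → Matrix (Fin n) (Fin n) ℂ)
    (hf : RightCanonicalFactorizationDatum n f fm fp)
    (hg : RightCanonicalFactorizationDatum n f gm gp) :
    ∀ z ∈ closedDisk,
      fm (starRingEnd ℂ z) * fp z = gm (starRingEnd ℂ z) * gp z :=
  interior_extension_independent_of_right_factorization_general f fm fp gm gp hf hg
end

section
/- Let h = [[−2, 0, 0], [0, −1, 1], [0, 1, 1]] (a real symmetric 3×3 matrix), let C = [[0, h], [h, 0]] ∈ M_6(ℂ) in 3×3 block form, and let I = [[0, 1₃], [1₃, 0]] where 1₃ is the 3×3 identity. Then C is Hermitian, its negative eigenvalues are exactly −2 and −√2, with −√2 of multiplicity two, the sum of the eigenspaces of C for its negative eigenvalues is a 3-dimensional subspace of ℂ⁶, and the intersection of this subspace with the (−1)-eigenspace of I is 1-dimensional. (In the notation of the paper, n₋(1,−1) = 1 for the deformed Hamiltonian H₁.) -/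
open Complex Matrix

/-- The set of negative (real) eigenvalues of a `6×6` complex matrix. -/
def negEigenvalues (A : Matrix (Fin 3 ⊕ Fin 3) (Fin 3 ⊕ Fin 3) ℂ) : Set ℂ :=
  {μ : ℂ | μ ∈ spectrum ℂ A ∧ ∃ x : ℝ, (x : ℂ) = μ ∧ x < 0}

/-- The sum of the eigenspaces of `A` for its negative eigenvalues, as a subspace of `ℂ⁶`. -/
noncomputable def negSpace (A : Matrix (Fin 3 ⊕ Fin 3) (Fin 3 ⊕ Fin 3) ℂ) :
    Submodule ℂ ((Fin 3 ⊕ Fin 3) → ℂ) :=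
  ⨆ μ ∈ negEigenvalues A, Module.End.eigenspace (Matrix.toLin' A) μ

/-- The inversion symmetry operator `I = [[0, 1₃], [1₃, 0]]`. -/
noncomputable def inversionOp : Matrix (Fin 3 ⊕ Fin 3) (Fin 3 ⊕ Fin 3) ℂ :=
  Matrix.fromBlocks 0 1 1 0

/-- The off-diagonal block `h₁(1,−1)` of the deformed Hamiltonian at the fixed point `(1,−1)`. -/
noncomputable def hOneMinusOne : Matrix (Fin 3) (Fin 3) ℂ := !![-2, 0, 0; 0, -1, 1; 0, 1, 1]

/-- The deformed Hamiltonian `H₁(1,−1)` in block form. -/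
noncomputable def COneMinusOne : Matrix (Fin 3 ⊕ Fin 3) (Fin 3 ⊕ Fin 3) ℂ :=
  Matrix.fromBlocks 0 hOneMinusOne hOneMinusOne 0

/-!
The block swap `I` commutes with `C = [[0, h], [h, 0]]`, and on its two eigenspaces, the even
vectors `(v, v)` and the odd vectors `(v, -v)`, `C` acts as `h` and `-h` respectively. Hence the
`μ`-eigenspace of `C` is the even copy of the `μ`-eigenspace of `h` plus the odd copy of its
`(-μ)`-eigenspace. Here `h` has the simple eigenvalues `-2, √2, -√2`, so the negative eigenvalues
of `C` are `-2` (even) and `-√2` (once even, once odd), and exactly one occupied state is odd.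
-/

open Module

section Eigenspaces

variable {K V : Type*} [Field K] [AddCommGroup V] [Module K V] [FiniteDimensional K V]

lemma hasEigenvalue_iff_finrank_eigenspace_ne_zero {f : End K V} {μ : K} :
    f.HasEigenvalue μ ↔ finrank K (f.eigenspace μ) ≠ 0 := by
  rw [End.hasEigenvalue_iff, ne_eq, ne_eq, Submodule.finrank_eq_zero]

lemma finrank_eigenspace_sup_eigenspace (f : End K V) {μ ν : K} (hμν : μ ≠ ν) :
    finrank K ↥(f.eigenspace μ ⊔ f.eigenspace ν) =
      finrank K (f.eigenspace μ) + finrank K (f.eigenspace ν) := by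
  have hsum := Submodule.finrank_sup_add_finrank_inf_eq (f.eigenspace μ) (f.eigenspace ν)
  rwa [(f.eigenspaces_iSupIndep.pairwiseDisjoint hμν).eq_bot, finrank_bot, add_zero] at hsum

end Eigenspaces

section ParityDecomposition

variable {K n : Type*} [Field K]

def evenEmbedding : (n → K) →ₗ[K] (n ⊕ n → K) where
  toFun v := Sum.elim v v
  map_add' v w := Sum.elim_add_add v w v w
  map_smul' c v := by ext (i | i) <;> rfl

def oddEmbedding : (n → K) →ₗ[K] (n ⊕ n → K) where
  toFun v := Sum.elim v (-v)
  map_add' v w := by ext (i | i) <;> simp [add_comm]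
  map_smul' c v := by ext (i | i) <;> simp

@[simp]
lemma evenEmbedding_apply (v : n → K) : evenEmbedding v = Sum.elim v v := rfl

@[simp]
lemma oddEmbedding_apply (v : n → K) : oddEmbedding v = Sum.elim v (-v) := rfl

lemma evenEmbedding_injective : Function.Injective (evenEmbedding : (n → K) →ₗ[K] _) :=
  fun _ _ h => funext fun i => congr_fun h (Sum.inl i)

lemma oddEmbedding_injective : Function.Injective (oddEmbedding : (n → K) →ₗ[K] _) :=
  fun _ _ h => funext fun i => congr_fun h (Sum.inl i)

lemma fromBlocks_mulVec_evenEmbedding [Fintype n] (h : Matrix n n K) (v : n → K) :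
    fromBlocks 0 h h 0 *ᵥ evenEmbedding v = evenEmbedding (h *ᵥ v) := by
  simp [fromBlocks_mulVec, Function.comp_def]

lemma fromBlocks_mulVec_oddEmbedding [Fintype n] (h : Matrix n n K) (v : n → K) :
    fromBlocks 0 h h 0 *ᵥ oddEmbedding v = -oddEmbedding (h *ᵥ v) := by
  ext (i | i) <;> simp [fromBlocks_mulVec, mulVec_neg]

lemma eigenspace_fromBlocks_one_neg_one [Fintype n] [DecidableEq n] :
    End.eigenspace (toLin' (fromBlocks 0 1 1 0 : Matrix (n ⊕ n) (n ⊕ n) K)) (-1) =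
      LinearMap.range oddEmbedding := by
  ext x
  simp only [End.mem_eigenspace_iff, toLin'_apply, fromBlocks_mulVec, LinearMap.mem_range]
  constructor
  · intro hx
    refine ⟨x ∘ Sum.inl, funext fun i => ?_⟩
    rcases i with i | i
    · rfl
    · simpa using (congr_fun hx (Sum.inl i)).symm
  · rintro ⟨v, rfl⟩
    ext (i | i) <;> simp [Function.comp_def]

variable [NeZero (2 : K)]

lemma evenEmbedding_add_oddEmbedding_inj {p q p' q' : n → K} :
    evenEmbedding p + oddEmbedding q = evenEmbedding p' + oddEmbedding q' ↔
      p = p' ∧ q = q' := by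
  refine ⟨fun h => ?_, fun ⟨hp, hq⟩ => hp ▸ hq ▸ rfl⟩
  have hl (i : n) : p i + q i = p' i + q' i := by simpa using congr_fun h (Sum.inl i)
  have hr (i : n) : p i - q i = p' i - q' i := by
    simpa [sub_eq_add_neg] using congr_fun h (Sum.inr i)
  have two_mul_inj {a b : K} (hab : 2 * a = 2 * b) : a = b := mul_left_cancel₀ two_ne_zero hab
  exact ⟨funext fun i => two_mul_inj (by linear_combination hl i + hr i),
    funext fun i => two_mul_inj (by linear_combination hl i - hr i)⟩

lemma exists_evenEmbedding_add_oddEmbedding (x : n ⊕ n → K) :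
    ∃ p q, evenEmbedding p + oddEmbedding q = x := by
  refine ⟨(2 : K)⁻¹ • (x ∘ Sum.inl + x ∘ Sum.inr),
    (2 : K)⁻¹ • (x ∘ Sum.inl - x ∘ Sum.inr), ?_⟩
  ext (i | i) <;>
    simp only [Pi.add_apply, Pi.sub_apply, Pi.neg_apply, Pi.smul_apply, smul_eq_mul,
      Function.comp_apply, evenEmbedding_apply, oddEmbedding_apply, Sum.elim_inl, Sum.elim_inr] <;>
    field_simp <;> ring

lemma disjoint_range_evenEmbedding_oddEmbedding :
    Disjoint (LinearMap.range (evenEmbedding : (n → K) →ₗ[K] _))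
      (LinearMap.range oddEmbedding) := by
  rw [Submodule.disjoint_def]
  rintro _ ⟨p, rfl⟩ ⟨q, hq⟩
  have hp := (evenEmbedding_add_oddEmbedding_inj (q := 0) (p' := 0)).mp
    (by simp [← hq] : evenEmbedding p + oddEmbedding 0 = evenEmbedding 0 + oddEmbedding q)
  simp [hp.1]

lemma map_evenEmbedding_sup_map_oddEmbedding_inf_range_oddEmbedding (A B : Submodule K (n → K)) :
    (A.map evenEmbedding ⊔ B.map oddEmbedding) ⊓ LinearMap.range oddEmbedding =
      B.map oddEmbedding := by
  rw [sup_comm, sup_inf_assoc_of_le _ LinearMap.map_le_range,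
    (disjoint_range_evenEmbedding_oddEmbedding.mono_left LinearMap.map_le_range).eq_bot,
    sup_bot_eq]

lemma finrank_map_evenEmbedding_sup_map_oddEmbedding [Finite n] (A B : Submodule K (n → K)) :
    finrank K ↥(A.map evenEmbedding ⊔ B.map oddEmbedding) = finrank K A + finrank K B := by
  have hd : Disjoint (A.map evenEmbedding) (B.map oddEmbedding) :=
    disjoint_range_evenEmbedding_oddEmbedding.mono LinearMap.map_le_range LinearMap.map_le_range
  have hsum := Submodule.finrank_sup_add_finrank_inf_eq (A.map evenEmbedding) (B.map oddEmbedding)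
  rw [hd.eq_bot, finrank_bot, add_zero] at hsum
  rw [hsum, ← (Submodule.equivMapOfInjective _ evenEmbedding_injective A).finrank_eq,
    ← (Submodule.equivMapOfInjective _ oddEmbedding_injective B).finrank_eq]

variable [Fintype n] [DecidableEq n]

lemma eigenspace_fromBlocks (h : Matrix n n K) (μ : K) :
    End.eigenspace (toLin' (fromBlocks 0 h h 0)) μ =
      (End.eigenspace (toLin' h) μ).map evenEmbedding ⊔
        (End.eigenspace (toLin' h) (-μ)).map oddEmbedding := by
  apply le_antisymm
  · intro x hx
    obtain ⟨p, q, rfl⟩ := exists_evenEmbedding_add_oddEmbedding x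
    rw [End.mem_eigenspace_iff, toLin'_apply, mulVec_add, fromBlocks_mulVec_evenEmbedding,
      fromBlocks_mulVec_oddEmbedding, ← map_neg, smul_add, ← map_smul, ← map_smul,
      evenEmbedding_add_oddEmbedding_inj] at hx
    refine Submodule.add_mem_sup (Submodule.mem_map_of_mem ?_) (Submodule.mem_map_of_mem ?_)
    · rw [End.mem_eigenspace_iff, toLin'_apply, hx.1]
    · rw [End.mem_eigenspace_iff, toLin'_apply, neg_smul, ← hx.2, neg_neg]
  · rw [sup_le_iff, Submodule.map_le_iff_le_comap, Submodule.map_le_iff_le_comap]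
    constructor <;> intro v hv <;>
      simp only [Submodule.mem_comap, End.mem_eigenspace_iff, toLin'_apply] at hv ⊢
    · rw [fromBlocks_mulVec_evenEmbedding, hv, map_smul]
    · rw [fromBlocks_mulVec_oddEmbedding, hv, map_smul, neg_smul, neg_neg]

lemma finrank_eigenspace_fromBlocks (h : Matrix n n K) (μ : K) :
    finrank K (End.eigenspace (toLin' (fromBlocks 0 h h 0)) μ) =
      finrank K (End.eigenspace (toLin' h) μ) + finrank K (End.eigenspace (toLin' h) (-μ)) := by
  rw [eigenspace_fromBlocks, finrank_map_evenEmbedding_sup_map_oddEmbedding]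

lemma hasEigenvalue_fromBlocks_iff (h : Matrix n n K) (μ : K) :
    End.HasEigenvalue (toLin' (fromBlocks 0 h h 0)) μ ↔
      End.HasEigenvalue (toLin' h) μ ∨ End.HasEigenvalue (toLin' h) (-μ) := by
  simp only [hasEigenvalue_iff_finrank_eigenspace_ne_zero, finrank_eigenspace_fromBlocks]
  omega

end ParityDecomposition

lemma isHermitian_hOneMinusOne : hOneMinusOne.IsHermitian :=
  IsHermitian.ext fun i j => by fin_cases i <;> fin_cases j <;> simp [hOneMinusOne]

lemma isHermitian_COneMinusOne : COneMinusOne.IsHermitian :=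
  isHermitian_zero.fromBlocks isHermitian_hOneMinusOne.eq isHermitian_zero

lemma mem_eigenspace_hOneMinusOne_iff {c : ℂ} {v : Fin 3 → ℂ} :
    v ∈ End.eigenspace (toLin' hOneMinusOne) c ↔
      -2 * v 0 = c * v 0 ∧ -v 1 + v 2 = c * v 1 ∧ v 1 + v 2 = c * v 2 := by
  rw [End.mem_eigenspace_iff, toLin'_apply, ← List.ofFn_inj]
  simp [hOneMinusOne, dotProduct, Fin.sum_univ_three]

lemma eq_neg_two_or_sq_eq_two_of_hasEigenvalue {c : ℂ}
    (hc : End.HasEigenvalue (toLin' hOneMinusOne) c) : c = -2 ∨ c ^ 2 = 2 := by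
  obtain ⟨v, hv, hv0⟩ := hc.exists_hasEigenvector
  obtain ⟨e₀, e₁, e₂⟩ := mem_eigenspace_hOneMinusOne_iff.mp hv
  by_contra! hne
  have hc2 : c ^ 2 - 2 ≠ 0 := sub_ne_zero.mpr hne.2
  have h₀ : v 0 = 0 := by
    have : (c + 2) * v 0 = 0 := by linear_combination -e₀
    exact (mul_eq_zero.mp this).resolve_left (by simpa [add_eq_zero_iff_eq_neg] using hne.1)
  have h₁ : v 1 = 0 := by
    have : (c ^ 2 - 2) * v 1 = 0 := by linear_combination (1 - c) * e₁ - e₂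
    exact (mul_eq_zero.mp this).resolve_left hc2
  have h₂ : v 2 = 0 := by
    have : (c ^ 2 - 2) * v 2 = 0 := by linear_combination -e₁ - (1 + c) * e₂
    exact (mul_eq_zero.mp this).resolve_left hc2
  exact hv0 (funext fun i => by fin_cases i <;> assumption)

lemma eigenspace_hOneMinusOne_two : End.eigenspace (toLin' hOneMinusOne) 2 = ⊥ := by
  by_contra hne
  rcases eq_neg_two_or_sq_eq_two_of_hasEigenvalue (End.hasEigenvalue_iff.mpr hne) with h | h <;>
    norm_num at h

lemma eigenspace_hOneMinusOne_neg_two :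
    End.eigenspace (toLin' hOneMinusOne) (-2) = Submodule.span ℂ {![1, 0, 0]} := by
  ext v
  rw [mem_eigenspace_hOneMinusOne_iff, Submodule.mem_span_singleton]
  constructor
  · rintro ⟨-, e₁, e₂⟩
    have h₁ : v 1 = 0 := by linear_combination (3 * e₁ - e₂) / 2
    have h₂ : v 2 = 0 := by linear_combination (e₂ - e₁) / 2
    exact ⟨v 0, funext fun i => by fin_cases i <;> simp [h₁, h₂]⟩
  · rintro ⟨a, rfl⟩
    simp

lemma eigenspace_hOneMinusOne_of_sq_eq_two {c : ℂ} (hc : c ^ 2 = 2) :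
    End.eigenspace (toLin' hOneMinusOne) c = Submodule.span ℂ {![0, 1, 1 + c]} := by
  ext v
  rw [mem_eigenspace_hOneMinusOne_iff, Submodule.mem_span_singleton]
  constructor
  · rintro ⟨e₀, e₁, -⟩
    have h₀ : v 0 = 0 := by
      have : (c + 2) * v 0 = 0 := by linear_combination -e₀
      refine (mul_eq_zero.mp this).resolve_left fun h => ?_
      rw [eq_neg_of_add_eq_zero_left h] at hc
      norm_num at hc
    have h₂ : v 2 = (1 + c) * v 1 := by linear_combination e₁
    exact ⟨v 1, funext fun i => by fin_cases i <;> simp [h₀, h₂, mul_comm]⟩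
  · rintro ⟨a, rfl⟩
    simp only [Matrix.smul_cons, smul_eq_mul, Matrix.smul_empty, Matrix.cons_val]
    exact ⟨by ring, by ring, by linear_combination -a * hc⟩

lemma finrank_eigenspace_hOneMinusOne_neg_two :
    finrank ℂ (End.eigenspace (toLin' hOneMinusOne) (-2)) = 1 := by
  rw [eigenspace_hOneMinusOne_neg_two, finrank_span_singleton (by simp)]

lemma ofReal_sqrt_two_sq : ((√2 : ℝ) : ℂ) ^ 2 = 2 := by
  rw [← ofReal_pow, Real.sq_sqrt zero_le_two, ofReal_ofNat]

lemma finrank_eigenspace_hOneMinusOne_sqrt_two :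
    finrank ℂ (End.eigenspace (toLin' hOneMinusOne) √2) = 1 := by
  rw [eigenspace_hOneMinusOne_of_sq_eq_two ofReal_sqrt_two_sq, finrank_span_singleton (by simp)]

lemma finrank_eigenspace_hOneMinusOne_neg_sqrt_two :
    finrank ℂ (End.eigenspace (toLin' hOneMinusOne) (-√2)) = 1 := by
  rw [eigenspace_hOneMinusOne_of_sq_eq_two (by rw [neg_sq, ofReal_sqrt_two_sq]),
    finrank_span_singleton (by simp)]

lemma negEigenvalues_COneMinusOne : negEigenvalues COneMinusOne = {(-2 : ℂ), -(√2 : ℂ)} := by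
  ext μ
  simp only [negEigenvalues, Set.mem_ofPred_eq, Set.mem_insert_iff, Set.mem_singleton_iff,
    ← spectrum_toLin', ← End.hasEigenvalue_iff_mem_spectrum, COneMinusOne,
    hasEigenvalue_fromBlocks_iff]
  constructor
  · rintro ⟨hμ, x, rfl, hx⟩
    have hx2 : x = -2 ∨ x ^ 2 = 2 := by
      rcases hμ with h | h <;> rcases eq_neg_two_or_sq_eq_two_of_hasEigenvalue h with h | h
      · exact Or.inl (by exact_mod_cast h)
      · exact Or.inr (by exact_mod_cast h)
      · exact absurd (by exact_mod_cast neg_eq_iff_eq_neg.mp h : x = 2) (by linarith)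
      · exact Or.inr (by exact_mod_cast (neg_sq (x : ℂ)).symm.trans h)
    rcases hx2 with rfl | hx2
    · exact Or.inl (by push_cast; rfl)
    · have hsqrt : √2 = -x := by rw [← hx2, Real.sqrt_sq_eq_abs, abs_of_neg hx]
      exact Or.inr (by rw [hsqrt, ofReal_neg, neg_neg])
  · rintro (rfl | rfl)
    · refine ⟨Or.inl ?_, -2, by push_cast; rfl, by norm_num⟩
      rw [hasEigenvalue_iff_finrank_eigenspace_ne_zero, finrank_eigenspace_hOneMinusOne_neg_two]
      exact one_ne_zero
    · refine ⟨Or.inl ?_, -√2, by push_cast; rfl, by simp⟩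
      rw [hasEigenvalue_iff_finrank_eigenspace_ne_zero,
        finrank_eigenspace_hOneMinusOne_neg_sqrt_two]
      exact one_ne_zero

lemma negSpace_COneMinusOne : negSpace COneMinusOne =
    (End.eigenspace (toLin' hOneMinusOne) (-2) ⊔
        End.eigenspace (toLin' hOneMinusOne) (-√2)).map evenEmbedding ⊔
      (End.eigenspace (toLin' hOneMinusOne) √2).map oddEmbedding := by
  rw [negSpace, negEigenvalues_COneMinusOne, iSup_pair, COneMinusOne, eigenspace_fromBlocks,
    eigenspace_fromBlocks, neg_neg, neg_neg, eigenspace_hOneMinusOne_two, Submodule.map_bot,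
    sup_bot_eq, ← sup_assoc, ← Submodule.map_sup]

/-- `n₋(1,−1) = 1`: `C = H₁(1,−1)` is Hermitian, its negative eigenvalues are exactly `−2` and
`−√2`, with `−√2` of multiplicity two, the sum of the corresponding eigenspaces is
3-dimensional, and its intersection with the `(−1)`-eigenspace of the inversion operator is
1-dimensional. -/
theorem nMinus_at_one_minus_one :
    COneMinusOne.IsHermitian ∧
    negEigenvalues COneMinusOne = {(-2 : ℂ), -(Real.sqrt 2 : ℂ)} ∧
    Module.finrank ℂ
      ↥(Module.End.eigenspace (Matrix.toLin' COneMinusOne) (-(Real.sqrt 2 : ℂ))) = 2 ∧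
    Module.finrank ℂ ↥(negSpace COneMinusOne) = 3 ∧
    Module.finrank ℂ
      ↥(negSpace COneMinusOne ⊓ Module.End.eigenspace (Matrix.toLin' inversionOp) (-1)) = 1 := by
  have hne : (-2 : ℂ) ≠ -√2 := fun h => by
    have := congrArg (· ^ 2) h
    norm_num [neg_sq, ofReal_sqrt_two_sq] at this
  refine ⟨isHermitian_COneMinusOne, negEigenvalues_COneMinusOne, ?_, ?_, ?_⟩
  · rw [COneMinusOne, finrank_eigenspace_fromBlocks, neg_neg,
      finrank_eigenspace_hOneMinusOne_neg_sqrt_two, finrank_eigenspace_hOneMinusOne_sqrt_two]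
  · rw [negSpace_COneMinusOne, finrank_map_evenEmbedding_sup_map_oddEmbedding,
      finrank_eigenspace_sup_eigenspace _ hne, finrank_eigenspace_hOneMinusOne_neg_two,
      finrank_eigenspace_hOneMinusOne_neg_sqrt_two, finrank_eigenspace_hOneMinusOne_sqrt_two]
  · rw [negSpace_COneMinusOne, inversionOp, eigenspace_fromBlocks_one_neg_one,
      map_evenEmbedding_sup_map_oddEmbedding_inf_range_oddEmbedding,
      ← (Submodule.equivMapOfInjective _ oddEmbedding_injective _).finrank_eq,
      finrank_eigenspace_hOneMinusOne_sqrt_two]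
end

section
/- Let h₁(z,w) = [[zw + w, z − 1, 0], [z − 1, z w⁻¹ + w⁻¹ + 1, 1], [0, 1, z⁻¹]], let I = [[0, 1₃], [1₃, 0]] ∈ M_6(ℂ), and for each of the four points Γ ∈ {(1,1), (−1,1), (1,−1), (−1,−1)} set A_Γ = [[0, h₁(Γ)], [h₁(Γ), 0]] ∈ M_6(ℂ) in 3×3 block form (each h₁(Γ) is real symmetric, so A_Γ is Hermitian). Let n₋(Γ) be the dimension of the intersection of the sum of the eigenspaces of A_Γ for its negative eigenvalues with the (−1)-eigenspace of I. Then n₋(1,1) = 3 and n₋(−1,1) = n₋(1,−1) = n₋(−1,−1) = 1, so that n₋(1,1) + n₋(−1,1) + n₋(1,−1) + n₋(−1,−1) = 6; in particular the symmetry-based indicator μ_{2D}(H₁) = −Σ_Γ n₋(Γ) mod 4 equals 2. -/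
/-
Since `A = [[0, h], [h, 0]]` and `I = [[0, 1], [1, 0]]`, every eigenbasis `v` of `h` gives a
common eigenbasis of `A` and `I`: the vectors `(vⱼ, vⱼ)` have `A`-eigenvalue `λⱼ` and parity `+1`,
and the vectors `(vⱼ, -vⱼ)` have `A`-eigenvalue `-λⱼ` and parity `-1`. Hence `n₋` counts the
positive eigenvalues of `h`. The matrices `h₁(1, 1)`, `h₁(1, -1)` and `h₁(-1, w)` (which does
not depend on `w`) have eigenvalues `2 - √2, 2, 2 + √2`, `-2, -√2, √2` and `-2, 1 - √3, 1 + √3`.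
-/

open Complex Matrix

/-- The number `n₋(Γ)` of occupied states of odd parity: the dimension of the intersection of
the sum of the negative eigenspaces of `A` with the `(−1)`-eigenspace of the inversion
operator. -/
noncomputable def nMinus (A : Matrix (Fin 3 ⊕ Fin 3) (Fin 3 ⊕ Fin 3) ℂ) : ℕ :=
  Module.finrank ℂ
    ↥(negSpace A ⊓ Module.End.eigenspace (Matrix.toLin' inversionOp) (-1))

/-- The off-diagonal block `h₁(z,w)` of the deformed two-dimensional model Hamiltonian. -/
noncomputable def hOne (z w : ℂ) : Matrix (Fin 3) (Fin 3) ℂ :=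
  !![z * w + w, z - 1, 0;
     z - 1, z * w⁻¹ + w⁻¹ + 1, 1;
     0, 1, z⁻¹]

/-- The deformed Hamiltonian `H₁` at a fixed point `Γ = (z,w)`, in block form. -/
noncomputable def AFixed (z w : ℂ) : Matrix (Fin 3 ⊕ Fin 3) (Fin 3 ⊕ Fin 3) ℂ :=
  Matrix.fromBlocks 0 (hOne z w) (hOne z w) 0

open Module End Submodule

section EigenBasis

variable {K M ι : Type*} [Field K] [AddCommGroup M] [Module K M]

theorem Module.Basis.span_image_inf_span_image (b : Basis ι K M) (s t : Set ι) :
    span K (b '' s) ⊓ span K (b '' t) = span K (b '' (s ∩ t)) := by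
  ext x
  simp only [mem_inf, b.mem_span_image, Set.subset_inter_iff]

theorem Module.Basis.finrank_span_image [Finite ι] (b : Basis ι K M) (s : Set ι) :
    finrank K (span K (b '' s)) = s.ncard := by
  have := Fintype.ofFinite s
  rw [Set.image_eq_range, ← Nat.card_coe_set_eq, Nat.card_eq_fintype_card]
  exact finrank_span_eq_card (b.linearIndependent.comp _ Subtype.val_injective)

theorem Module.Basis.repr_apply_eq_mul_of_eigenvectors {f : End K M} {b : Basis ι K M}
    {d : ι → K} (hf : ∀ i, f (b i) = d i • b i) (x : M) (i : ι) :
    b.repr (f x) i = d i * b.repr x i := by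
  have : b.coord i ∘ₗ f = d i • b.coord i :=
    b.ext fun j => by by_cases h : j = i <;> simp [hf, h]
  exact LinearMap.congr_fun this x

theorem Module.End.eigenspace_eq_span_of_basis {f : End K M} {b : Basis ι K M} {d : ι → K}
    (hf : ∀ i, f (b i) = d i • b i) (μ : K) :
    eigenspace f μ = span K (b '' {i | d i = μ}) := by
  ext x
  rw [mem_eigenspace_iff, b.mem_span_image, ← b.repr.injective.eq_iff, Finsupp.ext_iff]
  simp only [b.repr_apply_eq_mul_of_eigenvectors hf, map_smul, Finsupp.smul_apply, smul_eq_mul]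
  refine forall_congr' fun i => ?_
  rw [mul_eq_mul_right_iff, or_iff_not_imp_right]
  simp only [Finset.mem_coe, Finsupp.mem_support_iff, Set.mem_ofPred_eq]

theorem Module.End.iSup_eigenspace_eq_span_of_basis {f : End K M} {b : Basis ι K M}
    {d : ι → K} (hf : ∀ i, f (b i) = d i • b i) (S : Set K) :
    ⨆ μ ∈ S, eigenspace f μ = span K (b '' (d ⁻¹' S)) := by
  simp_rw [eigenspace_eq_span_of_basis hf, ← span_iUnion₂, ← Set.image_iUnion₂]
  congr 2
  ext i
  simp

end EigenBasis

theorem nMinus_eq_ncard_of_basis {ι : Type*} [Finite ι]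
    {A : Matrix (Fin 3 ⊕ Fin 3) (Fin 3 ⊕ Fin 3) ℂ}
    (b : Basis ι ℂ (Fin 3 ⊕ Fin 3 → ℂ)) (e : ι → ℝ) (p : ι → ℂ)
    (hA : ∀ i, A *ᵥ b i = (e i : ℂ) • b i) (hI : ∀ i, inversionOp *ᵥ b i = p i • b i) :
    nMinus A = {i | e i < 0 ∧ p i = -1}.ncard := by
  have hneg : (fun i => (e i : ℂ)) ⁻¹' negEigenvalues A = {i | e i < 0} := by
    ext i
    have hspec : (e i : ℂ) ∈ spectrum ℂ A := by
      rw [← spectrum_toLin']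
      exact HasEigenvalue.mem_spectrum
        (hasEigenvalue_of_hasEigenvector ⟨mem_eigenspace_iff.2 (hA i), b.ne_zero i⟩)
    simp [negEigenvalues, hspec]
  rw [nMinus, negSpace, iSup_eigenspace_eq_span_of_basis hA, hneg,
    eigenspace_eq_span_of_basis hI, b.span_image_inf_span_image, b.finrank_span_image]
  rfl

section SumDiff

variable {n K : Type*} [Field K] [NeZero (2 : K)]

def sumDiffEquiv : ((n → K) × (n → K)) ≃ₗ[K] (n ⊕ n → K) where
  toFun p := Sum.elim (p.1 + p.2) (p.1 - p.2)
  invFun u := ((2 : K)⁻¹ • (u ∘ Sum.inl + u ∘ Sum.inr), (2 : K)⁻¹ • (u ∘ Sum.inl - u ∘ Sum.inr))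
  map_add' p q := by ext (i | i) <;> simp <;> ring
  map_smul' c p := by ext (i | i) <;> simp <;> ring
  left_inv p := by ext i <;> simp <;> field_simp <;> ring
  right_inv u := by ext (i | i) <;> simp <;> field_simp <;> ring

end SumDiff

theorem fromBlocks_zero_mulVec_sumElim {n α : Type*} [Fintype n] [NonUnitalNonAssocSemiring α]
    (h : Matrix n n α) (x y : n → α) :
    fromBlocks 0 h h 0 *ᵥ Sum.elim x y = Sum.elim (h *ᵥ y) (h *ᵥ x) := by
  simp [fromBlocks_mulVec]

theorem nMinus_fromBlocks_eq_ncard {ι : Type*} [Finite ι] {h : Matrix (Fin 3) (Fin 3) ℂ}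
    (v : Basis ι ℂ (Fin 3 → ℂ)) (μ : ι → ℝ) (hv : ∀ j, h *ᵥ v j = (μ j : ℂ) • v j) :
    nMinus (fromBlocks 0 h h 0) = {j | 0 < μ j}.ncard := by
  let b := (v.prod v).map sumDiffEquiv
  have hb_inl : ∀ j, b (Sum.inl j) = Sum.elim (v j) (v j) := fun j => by
    simp [b, sumDiffEquiv, Basis.prod_apply]
  have hb_inr : ∀ j, b (Sum.inr j) = Sum.elim (v j) (-v j) := fun j => by
    simp [b, sumDiffEquiv, Basis.prod_apply, sub_eq_add_neg]
  let e : ι ⊕ ι → ℝ := Sum.elim μ (-μ)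
  let p : ι ⊕ ι → ℂ := Sum.elim 1 (-1)
  have hset : {i | e i < 0 ∧ p i = -1} = Sum.inr '' {j | 0 < μ j} := by
    ext (j | j) <;> simp [e, p]
    norm_num
  rw [nMinus_eq_ncard_of_basis b e p, hset, Set.ncard_image_of_injective _ Sum.inr_injective]
  · rintro (j | j) <;> ext (i | i) <;>
      simp [e, hb_inl, hb_inr, fromBlocks_zero_mulVec_sumElim, mulVec_neg, hv]
  · rintro (j | j) <;> ext (i | i) <;>
      simp [p, hb_inl, hb_inr, inversionOp, fromBlocks_zero_mulVec_sumElim]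

theorem nMinus_fromBlocks_eq_ncard_of_eigenvectors {h : Matrix (Fin 3) (Fin 3) ℂ}
    (v : Fin 3 → Fin 3 → ℂ) (μ : Fin 3 → ℝ) (hμ : Function.Injective μ) (hv0 : ∀ j, v j ≠ 0)
    (hv : ∀ j, h *ᵥ v j = (μ j : ℂ) • v j) :
    nMinus (fromBlocks 0 h h 0) = {j | 0 < μ j}.ncard := by
  have hli : LinearIndependent ℂ v :=
    Module.End.eigenvectors_linearIndependent' (toLin' h) _ (Complex.ofReal_injective.comp hμ) v
      fun j => ⟨mem_eigenspace_iff.2 (hv j), hv0 j⟩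
  exact nMinus_fromBlocks_eq_ncard (basisOfLinearIndependentOfCardEqFinrank hli (by simp)) μ
    (by simpa using hv)

theorem hOne_one_one_mulVec_of_sq_eq {r : ℂ} (hr : r ^ 2 = 4 * r - 2) :
    hOne 1 1 *ᵥ ![0, 1, r - 3] = r • ![0, 1, r - 3] := by
  ext i
  fin_cases i <;> simp [hOne, mulVec, dotProduct, Fin.sum_univ_three]
  · ring
  · linear_combination -hr

theorem hOne_one_one_mulVec_e₀ : hOne 1 1 *ᵥ ![1, 0, 0] = (2 : ℂ) • ![1, 0, 0] := by
  ext i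
  fin_cases i <;> simp [hOne, mulVec, dotProduct, Fin.sum_univ_three]
  norm_num

theorem nMinus_AFixed_one_one : nMinus (AFixed 1 1) = 3 := by
  have hs : ((√2 : ℝ) : ℂ) ^ 2 = 2 := by norm_cast; simp
  rw [AFixed, nMinus_fromBlocks_eq_ncard_of_eigenvectors
    ![![0, 1, (2 - √2 : ℂ) - 3], ![1, 0, 0], ![0, 1, (2 + √2 : ℂ) - 3]] ![2 - √2, 2, 2 + √2]]
  · rw [show {j : Fin 3 | 0 < ![2 - √2, 2, 2 + √2] j} = Set.univ from
      Set.eq_univ_of_forall fun j => by fin_cases j <;> simp; positivity]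
    simp
  · refine StrictMono.injective (Fin.strictMono_iff_lt_succ.2 fun j => ?_)
    fin_cases j <;> simp
  · intro j
    fin_cases j <;> simp
  · intro j
    fin_cases j
    · simpa using hOne_one_one_mulVec_of_sq_eq (r := 2 - √2) (by linear_combination hs)
    · simpa using hOne_one_one_mulVec_e₀
    · simpa using hOne_one_one_mulVec_of_sq_eq (r := 2 + √2) (by linear_combination hs)

theorem hOne_one_neg_one_mulVec_of_sq_eq {r : ℂ} (hr : r ^ 2 = 2) :
    hOne 1 (-1) *ᵥ ![0, 1, r + 1] = r • ![0, 1, r + 1] := by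
  ext i
  fin_cases i <;> simp [hOne, mulVec, dotProduct, Fin.sum_univ_three]
  linear_combination -hr

theorem hOne_one_neg_one_mulVec_e₀ : hOne 1 (-1) *ᵥ ![1, 0, 0] = (-2 : ℂ) • ![1, 0, 0] := by
  ext i
  fin_cases i <;> simp [hOne, mulVec, dotProduct, Fin.sum_univ_three]
  norm_num

theorem nMinus_AFixed_one_neg_one : nMinus (AFixed 1 (-1)) = 1 := by
  have hs : ((√2 : ℝ) : ℂ) ^ 2 = 2 := by norm_cast; simp
  rw [AFixed, nMinus_fromBlocks_eq_ncard_of_eigenvectors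
    ![![1, 0, 0], ![0, 1, -√2 + 1], ![0, 1, √2 + 1]] ![-2, -√2, √2]]
  · rw [show {j : Fin 3 | 0 < ![-2, -√2, √2] j} = {2} by ext j; fin_cases j <;> simp]
    simp
  · refine StrictMono.injective (Fin.strictMono_iff_lt_succ.2 fun j => ?_)
    fin_cases j <;> simp
  · intro j
    fin_cases j <;> simp
  · intro j
    fin_cases j
    · simpa using hOne_one_neg_one_mulVec_e₀
    · simpa using hOne_one_neg_one_mulVec_of_sq_eq (r := -√2) (by linear_combination hs)
    · simpa using hOne_one_neg_one_mulVec_of_sq_eq (r := √2) (by linear_combination hs)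

theorem hOne_neg_one_mulVec_of_sq_eq (w : ℂ) {r : ℂ} (hr : r ^ 2 = 2 * r + 2) :
    hOne (-1) w *ᵥ ![-r, 1 + r, 1] = r • ![-r, 1 + r, 1] := by
  ext i
  fin_cases i <;> simp [hOne, mulVec, dotProduct, Fin.sum_univ_three]
  · linear_combination hr
  · linear_combination -hr

theorem hOne_neg_one_mulVec_eq_neg_two_smul (w : ℂ) :
    hOne (-1) w *ᵥ ![1, 1, -1] = (-2 : ℂ) • ![1, 1, -1] := by
  ext i
  fin_cases i <;> simp [hOne, mulVec, dotProduct, Fin.sum_univ_three] <;> norm_num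

theorem nMinus_AFixed_neg_one (w : ℂ) : nMinus (AFixed (-1) w) = 1 := by
  have hs : ((√3 : ℝ) : ℂ) ^ 2 = 3 := by norm_cast; simp
  have hs1 : 1 < √3 := by rw [Real.lt_sqrt zero_le_one]; norm_num
  have hs3 : √3 < 3 := by rw [Real.sqrt_lt' three_pos]; norm_num
  rw [AFixed, nMinus_fromBlocks_eq_ncard_of_eigenvectors
    ![![1, 1, -1], ![-(1 - √3), 1 + (1 - √3), 1], ![-(1 + √3), 1 + (1 + √3), 1]]
    ![-2, 1 - √3, 1 + √3]]
  · rw [show {j : Fin 3 | 0 < ![-2, 1 - √3, 1 + √3] j} = {2} by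
      ext j; fin_cases j <;> simp; positivity]
    simp
  · refine StrictMono.injective (Fin.strictMono_iff_lt_succ.2 fun j => ?_)
    fin_cases j <;> simp <;> linarith
  · intro j
    fin_cases j <;> simp
  · intro j
    fin_cases j
    · simpa using hOne_neg_one_mulVec_eq_neg_two_smul w
    · simpa using hOne_neg_one_mulVec_of_sq_eq w (r := 1 - √3) (by linear_combination hs)
    · simpa using hOne_neg_one_mulVec_of_sq_eq w (r := 1 + √3) (by linear_combination hs)

/-- The values of `n₋` at the four inversion-fixed points of the torus: `n₋(1,1) = 3` and
`n₋(−1,1) = n₋(1,−1) = n₋(−1,−1) = 1`, so their sum is `6` and the symmetry-based indicator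
`μ₂D(H₁) = −Σ n₋(Γ) mod 4` equals `2`. -/
theorem symmetry_based_indicator_of_deformed_Hamiltonian :
    nMinus (AFixed 1 1) = 3 ∧
    nMinus (AFixed (-1) 1) = 1 ∧
    nMinus (AFixed 1 (-1)) = 1 ∧
    nMinus (AFixed (-1) (-1)) = 1 ∧
    nMinus (AFixed 1 1) + nMinus (AFixed (-1) 1) + nMinus (AFixed 1 (-1)) +
      nMinus (AFixed (-1) (-1)) = 6 ∧
    -((nMinus (AFixed 1 1) + nMinus (AFixed (-1) 1) + nMinus (AFixed 1 (-1)) +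
      nMinus (AFixed (-1) (-1)) : ZMod 4)) = 2 := by
  rw [nMinus_AFixed_one_one, nMinus_AFixed_neg_one, nMinus_AFixed_one_neg_one,
    nMinus_AFixed_neg_one]
  exact ⟨rfl, rfl, rfl, rfl, rfl, by decide⟩
end
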